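/- Let G be a finite simple graph on vertex set V with symmetric propagation probabilities w(u,v) ∈ [0,1] on pairs of vertices, let P₁, …, P_ℓ be a partition of V, let M be the number of edges of G whose two endpoints lie in different parts (cross edges), and let p_m ∈ [0,1] satisfy w(u,v) ≤ p_m for all pairs u, v. Then for every seed set S ⊆ V, the over-count of the factored influence relative to the true influence is bounded by twice the cross-edge mass: Σ_{x=1}^ℓ I(S ∩ P_x) − I(S) ≤ 2 · p_m · M. -/

import Mathlib

/-- One-round expected influence of a seed set `S` in the vertex set `V`:
`I(S) = |S| + Σ_{v ∈ V∖S} (1 − ∏_{u ∈ S adjacent to v} (1 − w u v))`. -/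
def oneRoundInfluence {α : Type*} [DecidableEq α] (Adj : α → α → Prop)
    [DecidableRel Adj] (w : α → α → ℝ) (V S : Finset α) : ℝ :=
  (S.card : ℝ) +
    ∑ v ∈ V \ S, (1 - ∏ u ∈ S.filter (fun u => Adj u v), (1 - w u v))

/-!
Write the influence as a sum over `v ∈ V` of the probability that `v` is active after one round.
Fix `v`, lying in the part `P x₀`. Seeding only `S ∩ P x₀` activates `v` with probability at most
that of seeding all of `S`, and by the union bound every other part `x` adds at most
`p_m · #{u ∈ S ∩ P x adjacent to v}`. So the over-count at `v` is at most `p_m` times the number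
of cross edges from `v` into `S`, and summing over `v` counts every cross edge at most twice.
-/

open Finset Function

theorem one_sub_prod_one_sub_le_sum {ι : Type*} (s : Finset ι) {f : ι → ℝ}
    (h0 : ∀ i ∈ s, 0 ≤ f i) (h1 : ∀ i ∈ s, f i ≤ 1) :
    1 - ∏ i ∈ s, (1 - f i) ≤ ∑ i ∈ s, f i := by
  induction s using Finset.cons_induction with
  | empty => simp
  | cons a s ha ih =>
    rw [sum_cons, prod_cons]
    have ih := ih (fun i hi => h0 i (mem_cons_of_mem hi)) (fun i hi => h1 i (mem_cons_of_mem hi))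
    have ha0 := h0 a (mem_cons_self a s)
    have ha1 := h1 a (mem_cons_self a s)
    have hsum : 0 ≤ ∑ i ∈ s, f i := sum_nonneg fun i hi => h0 i (mem_cons_of_mem hi)
    nlinarith [mul_le_mul_of_nonneg_left ih (sub_nonneg.2 ha1), mul_nonneg ha0 hsum]

theorem sum_card_filter_le_two_mul_card {α : Type*} [DecidableEq α] {r : α → α → Prop}
    [DecidableRel r] (hirr : ∀ a, ¬ r a a) {A B : Finset α} {E : Finset (Finset α)}
    (hE : ∀ a ∈ A, ∀ b ∈ B, r a b → {a, b} ∈ E) :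
    ∑ a ∈ A, #{b ∈ B | r a b} ≤ 2 * #E := by
  have hpairs : ∑ a ∈ A, #{b ∈ B | r a b} = #{p ∈ A ×ˢ B | r p.1 p.2} := by
    rw [card_filter, sum_product]
    exact sum_congr rfl fun a _ => card_filter _ _
  rw [hpairs]
  set F := {p ∈ A ×ˢ B | r p.1 p.2}
  refine card_le_mul_card_image_of_maps_to (f := fun p => {p.1, p.2}) ?_ 2 ?_
  · intro p hp
    obtain ⟨hAB, hr⟩ := mem_filter.1 hp
    exact hE _ (mem_product.1 hAB).1 _ (mem_product.1 hAB).2 hr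
  · intro s _
    rcases ({q ∈ F | {q.1, q.2} = s}).eq_empty_or_nonempty with h | ⟨p, hp⟩
    · simp [h]
    obtain ⟨hpF, rfl⟩ := mem_filter.1 hp
    have hne : p.1 ≠ p.2 := fun h => hirr p.1 (h ▸ (mem_filter.1 hpF).2)
    calc #{q ∈ F | {q.1, q.2} = {p.1, p.2}}
        ≤ #({p.1, p.2} : Finset α).offDiag := by
          refine card_le_card fun q hq => ?_
          obtain ⟨hq, hqp⟩ := mem_filter.1 hq
          have hqne : q.1 ≠ q.2 := fun h => hirr q.1 (h ▸ (mem_filter.1 hq).2)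
          rw [mem_offDiag, ← hqp]
          exact ⟨by simp, by simp, hqne⟩
      _ = 2 := by rw [offDiag_card, card_pair hne]

section Activation

variable {α : Type*} (Adj : α → α → Prop) [DecidableRel Adj] (w : α → α → ℝ)

def activationProb (W : Finset α) (v : α) : ℝ :=
  1 - ∏ u ∈ W with Adj u v, (1 - w u v)

def activeProb [DecidableEq α] (W : Finset α) (v : α) : ℝ :=
  if v ∈ W then 1 else activationProb Adj w W v

variable {Adj w}

theorem oneRoundInfluence_eq_sum_activeProb [DecidableEq α] {V W : Finset α} (hW : W ⊆ V) :
    oneRoundInfluence Adj w V W = ∑ v ∈ V, activeProb Adj w W v := by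
  have hin : ∀ v ∈ W, activeProb Adj w W v = 1 := fun v hv => if_pos hv
  have hout : ∀ v ∈ V \ W, activeProb Adj w W v = activationProb Adj w W v :=
    fun v hv => if_neg (mem_sdiff.1 hv).2
  rw [← sum_sdiff hW, sum_congr rfl hin, sum_congr rfl hout, sum_const, nsmul_one, add_comm]
  rfl

theorem activationProb_le_one (hw1 : ∀ u v, w u v ≤ 1) (W : Finset α) (v : α) :
    activationProb Adj w W v ≤ 1 :=
  sub_le_self _ (prod_nonneg fun u _ => sub_nonneg.2 (hw1 u v))

theorem activationProb_mono (hw0 : ∀ u v, 0 ≤ w u v) (hw1 : ∀ u v, w u v ≤ 1)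
    {W W' : Finset α} (h : W ⊆ W') (v : α) :
    activationProb Adj w W v ≤ activationProb Adj w W' v :=
  sub_le_sub_left (prod_le_prod_of_subset_of_le_one (filter_subset_filter _ h)
    (fun u _ => sub_nonneg.2 (hw1 u v)) fun u _ _ => sub_le_self _ (hw0 u v)) 1

theorem activationProb_le_sum (hw0 : ∀ u v, 0 ≤ w u v) (hw1 : ∀ u v, w u v ≤ 1)
    (W : Finset α) (v : α) :
    activationProb Adj w W v ≤ ∑ u ∈ W with Adj u v, w u v :=
  one_sub_prod_one_sub_le_sum _ (fun u _ => hw0 u v) fun u _ => hw1 u v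

theorem activeProb_mono [DecidableEq α] (hw0 : ∀ u v, 0 ≤ w u v) (hw1 : ∀ u v, w u v ≤ 1)
    {W W' : Finset α} (h : W ⊆ W') (v : α) :
    activeProb Adj w W v ≤ activeProb Adj w W' v := by
  unfold activeProb
  split_ifs with hv hv'
  · exact le_rfl
  · exact absurd (h hv) hv'
  · exact activationProb_le_one hw1 W v
  · exact activationProb_mono hw0 hw1 h v

theorem activeProb_le_mul_card [DecidableEq α] (hw0 : ∀ u v, 0 ≤ w u v)
    (hw1 : ∀ u v, w u v ≤ 1) {p : ℝ} (hp : ∀ u v, w u v ≤ p) {W : Finset α} {v : α} (hv : v ∉ W) :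
    activeProb Adj w W v ≤ p * #{u ∈ W | Adj u v} := by
  rw [activeProb, if_neg hv]
  calc activationProb Adj w W v
      ≤ ∑ u ∈ W with Adj u v, w u v := activationProb_le_sum hw0 hw1 W v
    _ ≤ ∑ u ∈ W with Adj u v, p := sum_le_sum fun u _ => hp u v
    _ = p * #{u ∈ W | Adj u v} := by rw [sum_const, nsmul_eq_mul, mul_comm]

theorem sum_activeProb_inter_sub_le [DecidableEq α] {ℓ : ℕ}
    (hw0 : ∀ u v, 0 ≤ w u v) (hw1 : ∀ u v, w u v ≤ 1) {p : ℝ} (hp : ∀ u v, w u v ≤ p)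
    (hp0 : 0 ≤ p) {P : Fin ℓ → Finset α} (hdisj : Pairwise (Disjoint on P)) (S : Finset α)
    {v : α} {x₀ : Fin ℓ} (hv : v ∈ P x₀) :
    ∑ x, activeProb Adj w (S ∩ P x) v - activeProb Adj w S v
      ≤ p * #{u ∈ S | Adj u v ∧ ¬ ∃ x, u ∈ P x ∧ v ∈ P x} := by
  have hown : activeProb Adj w (S ∩ P x₀) v ≤ activeProb Adj w S v :=
    activeProb_mono hw0 hw1 inter_subset_left v
  have hothers : ∀ x ∈ univ.erase x₀,
      activeProb Adj w (S ∩ P x) v ≤ p * #{u ∈ S ∩ P x | Adj u v} := fun x hx =>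
    activeProb_le_mul_card hw0 hw1 hp fun hvx =>
      disjoint_left.1 (hdisj (ne_of_mem_erase hx)) (mem_inter.1 hvx).2 hv
  have hcross : ∑ x ∈ univ.erase x₀, #{u ∈ S ∩ P x | Adj u v}
      ≤ #{u ∈ S | Adj u v ∧ ¬ ∃ x, u ∈ P x ∧ v ∈ P x} := by
    rw [← card_biUnion fun x _ y _ hxy =>
      (hdisj hxy).mono (filter_subset _ _ |>.trans inter_subset_right)
        (filter_subset _ _ |>.trans inter_subset_right)]
    refine card_le_card fun u hu => ?_
    obtain ⟨x, hx, hu⟩ := mem_biUnion.1 hu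
    obtain ⟨huS, huP⟩ := mem_inter.1 (mem_filter.1 hu).1
    refine mem_filter.2 ⟨huS, (mem_filter.1 hu).2, ?_⟩
    rintro ⟨y, huy, hvy⟩
    have hyx₀ : y = x₀ := by_contra fun h => disjoint_left.1 (hdisj h) hvy hv
    exact disjoint_left.1 (hdisj (ne_of_mem_erase hx)) huP (hyx₀ ▸ huy)
  rw [← add_sum_erase _ _ (mem_univ x₀)]
  calc activeProb Adj w (S ∩ P x₀) v + ∑ x ∈ univ.erase x₀, activeProb Adj w (S ∩ P x) v
        - activeProb Adj w S v
      ≤ ∑ x ∈ univ.erase x₀, p * #{u ∈ S ∩ P x | Adj u v} := by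
        linarith [sum_le_sum hothers]
    _ ≤ p * #{u ∈ S | Adj u v ∧ ¬ ∃ x, u ∈ P x ∧ v ∈ P x} := by
        rw [← mul_sum]
        exact mul_le_mul_of_nonneg_left (by exact_mod_cast hcross) hp0

end Activation

def crossEdges {α : Type*} [DecidableEq α] {ℓ : ℕ} (G : SimpleGraph α) [DecidableRel G.Adj]
    (P : Fin ℓ → Finset α) (V : Finset α) : Finset (Finset α) :=
  (V.powersetCard 2).filter fun s => (∃ u ∈ s, ∃ v ∈ s, G.Adj u v) ∧ ¬ ∃ x, s ⊆ P x

theorem pair_mem_crossEdges {α : Type*} [DecidableEq α] {ℓ : ℕ} {G : SimpleGraph α}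
    [DecidableRel G.Adj] {P : Fin ℓ → Finset α} {V : Finset α} {u v : α} (hu : u ∈ V)
    (hv : v ∈ V) (hadj : G.Adj u v) (hcross : ¬ ∃ x, u ∈ P x ∧ v ∈ P x) :
    {u, v} ∈ crossEdges G P V :=
  mem_filter.2
    ⟨mem_powersetCard.2 ⟨insert_subset hu (singleton_subset_iff.2 hv), card_pair hadj.ne⟩,
    ⟨u, by simp, v, by simp, hadj⟩, fun ⟨x, hx⟩ => hcross ⟨x, hx (by simp), hx (by simp)⟩⟩

theorem influence_overcount_bound_general {α : Type*} [DecidableEq α]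
    (G : SimpleGraph α) [DecidableRel G.Adj]
    (w : α → α → ℝ)
    (hw0 : ∀ u v, 0 ≤ w u v) (hw1 : ∀ u v, w u v ≤ 1)
    (V : Finset α) (ℓ : ℕ) (P : Fin ℓ → Finset α)
    (hdisj : ∀ x y : Fin ℓ, x ≠ y → Disjoint (P x) (P y))
    (hcover : Finset.univ.biUnion P = V)
    (p_m : ℝ) (hpm : ∀ u v, w u v ≤ p_m) (hpm0 : 0 ≤ p_m)
    (M : ℕ)
    (hM : M = ((V.powersetCard 2).filter
        (fun s => (∃ u ∈ s, ∃ v ∈ s, G.Adj u v) ∧ ¬ ∃ x : Fin ℓ, s ⊆ P x)).card)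
    (S : Finset α) (hS : S ⊆ V) :
    (∑ x : Fin ℓ, oneRoundInfluence G.Adj w V (S ∩ P x))
        - oneRoundInfluence G.Adj w V S
      ≤ 2 * p_m * (M : ℝ) := by
  have hcount : ∑ v ∈ V, #{u ∈ S | G.Adj u v ∧ ¬ ∃ x, u ∈ P x ∧ v ∈ P x} ≤ 2 * M := by
    rw [hM]
    refine sum_card_filter_le_two_mul_card (E := crossEdges G P V)
      (r := fun v u => G.Adj u v ∧ ¬ ∃ x, u ∈ P x ∧ v ∈ P x) (fun v h => G.irrefl h.1) ?_
    intro v hv u hu h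
    rw [pair_comm]
    exact pair_mem_crossEdges (hS hu) hv h.1 h.2
  calc (∑ x, oneRoundInfluence G.Adj w V (S ∩ P x)) - oneRoundInfluence G.Adj w V S
      = ∑ v ∈ V, (∑ x, activeProb G.Adj w (S ∩ P x) v - activeProb G.Adj w S v) := by
        simp only [oneRoundInfluence_eq_sum_activeProb (inter_subset_left.trans hS),
          oneRoundInfluence_eq_sum_activeProb hS, sum_sub_distrib]
        rw [sum_comm]
    _ ≤ ∑ v ∈ V, p_m * #{u ∈ S | G.Adj u v ∧ ¬ ∃ x, u ∈ P x ∧ v ∈ P x} := by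
        refine sum_le_sum fun v hv => ?_
        obtain ⟨x₀, -, hx₀⟩ := mem_biUnion.1 (hcover ▸ hv)
        exact sum_activeProb_inter_sub_le hw0 hw1 hpm hpm0 hdisj S hx₀
    _ ≤ 2 * p_m * M := by
        rw [← mul_sum, mul_comm 2, mul_assoc]
        exact mul_le_mul_of_nonneg_left (by exact_mod_cast hcount) hpm0

/-- For a finite simple graph `G` on vertex set `V` with symmetric
propagation probabilities `w u v ∈ [0,1]` bounded by `p_m`, a partition `P` of
`V`, and `M` the number of cross edges of `G` (edges whose endpoints lie in
different parts), for every seed set `S ⊆ V`: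
`Σₓ I(S ∩ Pₓ) − I(S) ≤ 2 · p_m · M`. -/
theorem influence_overcount_bound {α : Type*} [DecidableEq α]
    (G : SimpleGraph α) [DecidableRel G.Adj]
    (w : α → α → ℝ) (hsymm : ∀ u v, w u v = w v u)
    (hw0 : ∀ u v, 0 ≤ w u v) (hw1 : ∀ u v, w u v ≤ 1)
    (V : Finset α) (ℓ : ℕ) (P : Fin ℓ → Finset α)
    (hdisj : ∀ x y : Fin ℓ, x ≠ y → Disjoint (P x) (P y))
    (hcover : Finset.univ.biUnion P = V)
    (p_m : ℝ) (hpm : ∀ u v, w u v ≤ p_m) (hpm0 : 0 ≤ p_m) (hpm1 : p_m ≤ 1)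
    (M : ℕ)
    (hM : M = ((V.powersetCard 2).filter
        (fun s => (∃ u ∈ s, ∃ v ∈ s, G.Adj u v) ∧ ¬ ∃ x : Fin ℓ, s ⊆ P x)).card)
    (S : Finset α) (hS : S ⊆ V) :
    (∑ x : Fin ℓ, oneRoundInfluence G.Adj w V (S ∩ P x))
        - oneRoundInfluence G.Adj w V S
      ≤ 2 * p_m * (M : ℝ) :=
  influence_overcount_bound_general G w hw0 hw1 V ℓ P hdisj hcover p_m hpm hpm0 M hM S hS
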